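/- arXiv:2012.15818 — 5 statements merged into one kernel-verified Lean document; each statement's English description precedes it below -/
import Mathlib

section
/- For every balanced word w over an N-letter alphabet and every length n with 1 ≤ n ≤ |w|, the abelian complexity ρ_n(w) (the number of distinct Parikh vectors of factors of w of length n) is at most the central binomial coefficient K_N = max_k C(N,k) = C(N, ⌊N/2⌋). -/
/-!
Balance says that, letter by letter, the Parikh vectors of the length-`n` factors take at most
two consecutive values `c a` and `c a + 1`. Such a vector is therefore determined by the set of
letters at which it exceeds `c`, and since all these vectors have the same sum `n`, that set has
the same size `k` for every factor. Hence there are at most `C(N, k) ≤ C(N, ⌊N/2⌋)` of them.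
-/

/-- Two words are conjugate (cyclic rotations of each other). -/
def Conj {α : Type*} (w w' : List α) : Prop := ∃ x y : List α, w = x ++ y ∧ w' = y ++ x

/-- `u` is a factor of the circular word `[w]`. -/
def CFactor {α : Type*} (u w : List α) : Prop := ∃ w' : List α, Conj w w' ∧ u <:+: w'

/-- A (linear) word is balanced. -/
def WordIsBalanced {α : Type*} [DecidableEq α] (w : List α) : Prop :=
  ∀ u v : List α, u <:+: w → v <:+: w → u.length = v.length →
    ∀ a : α, ((u.count a : ℤ) - v.count a) ∈ ({-1, 0, 1} : Set ℤ)

/-- A circular word is balanced. -/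
def CircBalanced {α : Type*} [DecidableEq α] (w : List α) : Prop :=
  ∀ u v : List α, CFactor u w → CFactor v w → u.length = v.length →
    ∀ a : α, ((u.count a : ℤ) - v.count a) ∈ ({-1, 0, 1} : Set ℤ)

/-- The n-spectrum of a circular word: Parikh vectors of its length-n factors. -/
def circSpec {α : Type*} [DecidableEq α] (n : ℕ) (w : List α) : Set (α → ℕ) :=
  {p | ∃ u : List α, CFactor u w ∧ u.length = n ∧ (fun a => u.count a) = p}

/-- Abelian complexity of a circular word. -/
noncomputable def circAb {α : Type*} [DecidableEq α] (n : ℕ) (w : List α) : ℕ :=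
  (circSpec n w).ncard

/-- A word is primitive if it is not a proper power. -/
def Primitive {α : Type*} (w : List α) : Prop :=
  ∀ (u : List α) (q : ℕ), 2 ≤ q → w ≠ (List.replicate q u).flatten

/-- The lower Christoffel word `C(k, M-k)` of length `M` with `k` zeros. -/
def christoffel (k M : ℕ) : List (Fin 2) :=
  (List.range M).map (fun i => if i * (M - k) / M < (i + 1) * (M - k) / M then 1 else 0)

/-- The n-spectrum of a (linear) word. -/
def spec {α : Type*} [DecidableEq α] (n : ℕ) (w : List α) : Set (α → ℕ) :=
  {p | ∃ u : List α, u <:+: w ∧ u.length = n ∧ (fun a => u.count a) = p}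

section BoxVectors

variable {ι : Type*}

theorem exists_le_and_le_add_one_of_pairwise_le_add_one {S : Set (ι → ℕ)}
    (hS : ∀ p ∈ S, ∀ q ∈ S, ∀ a, p a ≤ q a + 1) :
    ∃ c : ι → ℕ, ∀ p ∈ S, ∀ a, c a ≤ p a ∧ p a ≤ c a + 1 := by
  refine ⟨fun a => sInf ((· a) '' S), fun p hp a => ⟨Nat.sInf_le ⟨p, hp, rfl⟩, ?_⟩⟩
  obtain ⟨q, hq, hqa⟩ := Nat.sInf_mem (⟨p a, p, hp, rfl⟩ : ((· a) '' S).Nonempty)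
  simpa only [← hqa] using hS p hp q hq a

variable [Fintype ι]

theorem ncard_le_choose_of_le_and_le_add_one {S : Set (ι → ℕ)} (c : ι → ℕ) (s : ℕ)
    (hbox : ∀ p ∈ S, ∀ a, c a ≤ p a ∧ p a ≤ c a + 1) (hsum : ∀ p ∈ S, ∑ a, p a = s) :
    S.ncard ≤ (Fintype.card ι).choose (s - ∑ a, c a) := by
  classical
  set excess : (ι → ℕ) → Finset ι := fun p => Finset.univ.filter (fun a => c a < p a)
  have eq_add_indicator : ∀ p ∈ S, p = fun a => c a + if a ∈ excess p then 1 else 0 := by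
    intro p hp
    funext a
    have := hbox p hp a
    simp only [excess, Finset.mem_filter, Finset.mem_univ, true_and]
    split_ifs <;> omega
  have card_excess : ∀ p ∈ S, (excess p).card = s - ∑ a, c a := by
    intro p hp
    have h := hsum p hp
    rw [eq_add_indicator p hp, Finset.sum_add_distrib, Finset.sum_boole, Finset.filter_mem_eq_inter,
      Finset.univ_inter] at h
    simp only [Nat.cast_id] at h
    omega
  calc S.ncard
      ≤ (Finset.powersetCard (s - ∑ a, c a) (Finset.univ : Finset ι) : Set (Finset ι)).ncard := by
        refine Set.ncard_le_ncard_of_injOn excess (fun p hp => ?_) (fun p hp q hq hpq => ?_)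
          (Finset.finite_toSet _)
        · simp [card_excess p hp]
        · rw [eq_add_indicator p hp, eq_add_indicator q hq, hpq]
    _ = (Fintype.card ι).choose (s - ∑ a, c a) := by
        rw [Set.ncard_coe_finset, Finset.card_powersetCard, Finset.card_univ]

theorem ncard_le_choose_half_of_pairwise_le_add_one {S : Set (ι → ℕ)} (s : ℕ)
    (hS : ∀ p ∈ S, ∀ q ∈ S, ∀ a, p a ≤ q a + 1) (hsum : ∀ p ∈ S, ∑ a, p a = s) :
    S.ncard ≤ (Fintype.card ι).choose (Fintype.card ι / 2) := by
  obtain ⟨c, hbox⟩ := exists_le_and_le_add_one_of_pairwise_le_add_one hS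
  exact (ncard_le_choose_of_le_and_le_add_one c s hbox hsum).trans (Nat.choose_le_middle _ _)

end BoxVectors

section Spectrum

variable {α : Type*} [DecidableEq α]

theorem sum_eq_of_mem_spec [Fintype α] {n : ℕ} {w : List α} {p : α → ℕ} (hp : p ∈ spec n w) :
    ∑ a, p a = n := by
  obtain ⟨u, -, rfl, rfl⟩ := hp
  simpa using Multiset.sum_count_eq_card (s := Finset.univ) (m := (u : Multiset α))
    (fun a _ => Finset.mem_univ a)

theorem WordIsBalanced.le_add_one_of_mem_spec {w : List α} (hw : WordIsBalanced w) {n : ℕ}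
    {p q : α → ℕ} (hp : p ∈ spec n w) (hq : q ∈ spec n w) (a : α) : p a ≤ q a + 1 := by
  obtain ⟨u, hu, hul, rfl⟩ := hp
  obtain ⟨v, hv, hvl, rfl⟩ := hq
  have h := hw u v hu hv (hul.trans hvl.symm) a
  simp only [Set.mem_insert_iff, Set.mem_singleton_iff] at h
  dsimp only
  omega

end Spectrum

theorem stmt_1_general {N : ℕ} (w : List (Fin N)) (hw : WordIsBalanced w)
    (n : ℕ) :
    (spec n w).ncard ≤ N.choose (N / 2) := by
  simpa using ncard_le_choose_half_of_pairwise_le_add_one n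
    (fun p hp q hq => hw.le_add_one_of_mem_spec hp hq) (fun p hp => sum_eq_of_mem_spec hp)

theorem stmt_1 {N : ℕ} (w : List (Fin N)) (hw : WordIsBalanced w)
    (n : ℕ) (h1 : 1 ≤ n) (h2 : n ≤ w.length) :
    (spec n w).ncard ≤ N.choose (N / 2) :=
  stmt_1_general w hw n
end

section
/- Let [w] be a primitive circular word over the alphabet A_N containing each letter at least once, and let p ≥ 2 be an integer. Then [w] is balanced if and only if its p-th power [w^p] is balanced. -/
/-!
Every factor `u` of `[w^p]` is a factor of the linear word `w^{2p}`. Cutting full periods of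
length `|w|` off such a factor removes a copy of the Parikh vector of `w` each time (a window of
length `|w|` in a power of `w` is a conjugate of `w`), and what is left is a factor of `[w]` of
length `|u| mod |w|`. So two factors of `[w^p]` of equal length differ letterwise exactly as two
factors of `[w]` of equal length do. Conversely, for `p ≥ 2` every factor of `[w]` is a factor
of `w w`, hence of `w^p`.
-/

open List

variable {α : Type*}

theorem List.infix_append_cases {u a b : List α} (h : u <:+: a ++ b) :
    u <:+: a ∨ u <:+: b ∨ ∃ u₁ u₂, u = u₁ ++ u₂ ∧ u₁ <:+ a ∧ u₂ <+: b := by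
  obtain ⟨s, t, h⟩ := h
  rw [append_assoc] at h
  rcases append_eq_append_iff.mp h.symm with ⟨a', _, hb⟩ | ⟨c', hc', hd⟩
  · exact Or.inr (Or.inl ⟨a', t, by rw [hb, append_assoc]⟩)
  rcases append_eq_append_iff.mp hd with ⟨a₂, hc, _⟩ | ⟨k, hu, hb⟩
  · exact Or.inl ⟨s, a₂, by rw [hc', hc, append_assoc]⟩
  · exact Or.inr (Or.inr ⟨c', k, hu, ⟨s, hc'.symm⟩, ⟨t, hb.symm⟩⟩)

theorem List.IsPrefix.of_flatten_replicate {u v : List α} {m : ℕ}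
    (h : u <+: (replicate m v).flatten) (hl : u.length ≤ v.length) : u <+: v := by
  cases m with
  | zero => simp_all
  | succ m =>
    rw [replicate_succ, flatten_cons] at h
    exact prefix_of_prefix_length_le h (prefix_append v _) hl

theorem Conj.refl (w : List α) : Conj w w := ⟨[], w, rfl, by simp⟩

theorem Conj.length_eq {w w' : List α} (h : Conj w w') : w'.length = w.length := by
  obtain ⟨x, y, rfl, rfl⟩ := h
  simp [Nat.add_comm]

theorem Conj.count_eq [DecidableEq α] {w w' : List α} (h : Conj w w') (a : α) :
    w'.count a = w.count a := by
  obtain ⟨x, y, rfl, rfl⟩ := h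
  simp [Nat.add_comm]

theorem CFactor.of_infix {u w : List α} (h : u <:+: w) : CFactor u w := ⟨w, Conj.refl w, h⟩

theorem CFactor.infix_append_self {u w : List α} (h : CFactor u w) : u <:+: w ++ w := by
  obtain ⟨_, ⟨x, y, rfl, rfl⟩, hu⟩ := h
  exact hu.trans ⟨x, y, by simp⟩

theorem CFactor.conj_of_length_eq {u w : List α} (h : CFactor u w) (hl : u.length = w.length) :
    Conj w u := by
  obtain ⟨w', hw', hu⟩ := h
  rwa [hu.eq_of_length (hl.trans hw'.length_eq.symm)]

theorem CFactor.flatten_replicate {u w : List α} (h : CFactor u w) {p : ℕ} (hp : 2 ≤ p) :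
    CFactor u (replicate p w).flatten := by
  obtain ⟨q, rfl⟩ := Nat.exists_eq_add_of_le hp
  refine .of_infix (h.infix_append_self.trans (IsPrefix.isInfix ?_))
  simp [replicate_add]

theorem CFactor.of_infix_flatten_replicate {u v : List α} {m : ℕ}
    (h : u <:+: (replicate m v).flatten) (hl : u.length ≤ v.length) : CFactor u v := by
  induction m with
  | zero => simp_all [CFactor.of_infix]
  | succ m ih =>
    rw [replicate_succ, flatten_cons] at h
    rcases infix_append_cases h with h | h | ⟨u₁, u₂, rfl, ⟨x, hx⟩, hu₂⟩
    · exact .of_infix h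
    · exact ih h
    -- straddling case: `u₁ ++ u₂` is a prefix of the conjugate `u₁ ++ x` of `v = x ++ u₁`
    have hu₂x : u₂ <+: x := by
      have := congrArg length hx
      simp only [length_append] at this hl
      exact prefix_of_prefix_length_le (hu₂.of_flatten_replicate (by omega)) ⟨u₁, hx⟩ (by omega)
    exact ⟨u₁ ++ x, ⟨x, u₁, hx.symm, rfl⟩,
      ((prefix_append_right_inj u₁).mpr hu₂x).isInfix⟩

theorem exists_cfactor_count_eq_of_infix_flatten_replicate [DecidableEq α] {u v : List α}
    {m : ℕ} (hv : v ≠ []) (h : u <:+: (replicate m v).flatten) :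
    ∃ r, CFactor r v ∧ r.length = u.length % v.length ∧
      ∀ a, u.count a = u.length / v.length * v.count a + r.count a := by
  induction hn : u.length using Nat.strong_induction_on generalizing u with
  | _ n ih =>
    subst hn
    rcases lt_or_ge u.length v.length with hlt | hle
    · exact ⟨u, .of_infix_flatten_replicate h hlt.le, (Nat.mod_eq_of_lt hlt).symm,
        fun a => by simp [Nat.div_eq_of_lt hlt]⟩
    have hv₀ : 0 < v.length := length_pos_iff.mpr hv
    have hperiod : Conj v (u.take v.length) :=
      CFactor.conj_of_length_eq (.of_infix_flatten_replicate
        ((take_prefix _ u).isInfix.trans h) (by simp)) (by simp [hle])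
    obtain ⟨r, hr, hrlen, hrcount⟩ :=
      ih (u.length - v.length) (by omega) ((drop_suffix _ u).isInfix.trans h) (length_drop ..)
    refine ⟨r, hr, by rw [hrlen, ← Nat.mod_eq_sub_mod hle], fun a => ?_⟩
    have hsplit := congrArg (count a) (take_append_drop v.length u)
    rw [count_append, hperiod.count_eq, hrcount] at hsplit
    rw [← hsplit, Nat.div_eq_sub_div hv₀ hle]
    ring

theorem CircBalanced.flatten_replicate [DecidableEq α] {w : List α} (hw : CircBalanced w)
    (p : ℕ) : CircBalanced (replicate p w).flatten := by
  rcases eq_or_ne w [] with rfl | hw₀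
  · simpa using hw
  have hinfix {u : List α} (hu : CFactor u (replicate p w).flatten) :
      u <:+: (replicate (p + p) w).flatten := by
    rw [replicate_add, flatten_append]
    exact hu.infix_append_self
  intro u v hu hv hlen a
  obtain ⟨r, hr, hrlen, hrcount⟩ :=
    exists_cfactor_count_eq_of_infix_flatten_replicate hw₀ (hinfix hu)
  obtain ⟨s, hs, hslen, hscount⟩ :=
    exists_cfactor_count_eq_of_infix_flatten_replicate hw₀ (hinfix hv)
  have hdiff : (u.count a : ℤ) - v.count a = (r.count a : ℤ) - s.count a := by
    rw [hrcount, hscount, hlen]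
    push_cast
    ring
  rw [hdiff]
  exact hw r s hr hs (by rw [hrlen, hslen, hlen]) a

theorem CircBalanced.of_flatten_replicate [DecidableEq α] {w : List α} {p : ℕ} (hp : 2 ≤ p)
    (h : CircBalanced (replicate p w).flatten) : CircBalanced w :=
  fun u v hu hv ↦ h u v (hu.flatten_replicate hp) (hv.flatten_replicate hp)

theorem stmt_3_general {N : ℕ} (w : List (Fin N)) (p : ℕ) (hp : 2 ≤ p) :
    CircBalanced w ↔ CircBalanced ((List.replicate p w).flatten) :=
  ⟨fun h ↦ h.flatten_replicate p, CircBalanced.of_flatten_replicate hp⟩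

theorem stmt_3 {N : ℕ} (w : List (Fin N)) (hprim : Primitive w)
    (hall : ∀ a : Fin N, a ∈ w) (p : ℕ) (hp : 2 ≤ p) :
    CircBalanced w ↔ CircBalanced ((List.replicate p w).flatten) :=
  stmt_3_general w p hp
end

section
/- A circular word over the binary alphabet {0,1} containing both letters is balanced if and only if it contains a representative which is a power of a Christoffel word. -/
/-!
Write `L` for the length of `w`, `h` for its number of `1`s, and `S t` (`onesPrefix w t`) for
the number of `1`s among the first `t` letters of `w w w ⋯`, so that `S (t + L) = S t + h` and
the factor of length `n` starting at `t` contains `S (t + n) - S t` ones. Averaged over the `L`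
starting points this is `n h / L`, so balance forces `S (t + n) - S t ≥ ⌊n h / L⌋` everywhere.
At a point `s` maximising `L S t - t h` we also get `S (s + n) - S s ≤ n h / L`, hence the
rotation of `w` by `s` has the prefix counts `⌊n h / L⌋` of the lower mechanical word
`mechanicalWord h L` of slope `h / L`, and so equals it. With `d = gcd h L` that word is the
`d`-th power of the Christoffel word of slope `(h / d) / (L / d)`. Conversely, a factor of a
mechanical word has `⌊(t + n) h / L⌋ - ⌊t h / L⌋`, that is `⌊n h / L⌋` or `⌊n h / L⌋ + 1`, ones.
-/

theorem Nat.add_div_le_add_div_add_one (a b c : ℕ) : (a + b) / c ≤ a / c + b / c + 1 := by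
  rcases c.eq_zero_or_pos with rfl | hc
  · simp
  rw [Nat.add_div hc]
  split <;> omega

theorem Function.Periodic.exists_lt_forall_le {α : Type*} [LinearOrder α] {g : ℕ → α} {L : ℕ}
    (hg : Function.Periodic g L) (hL : 0 < L) : ∃ s < L, ∀ t, g t ≤ g s := by
  obtain ⟨s, hs, hmax⟩ := (Finset.range L).exists_max_image g ⟨0, Finset.mem_range.2 hL⟩
  refine ⟨s, Finset.mem_range.1 hs, fun t ↦ ?_⟩
  rw [← hg.map_mod_nat t]
  exact hmax _ (Finset.mem_range.2 (Nat.mod_lt t hL))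

theorem Finset.sum_range_add_sub_eq_mul {S : ℕ → ℤ} {L : ℕ} {c : ℤ}
    (hS : ∀ t, S (t + L) = S t + c) (n : ℕ) :
    ∑ t ∈ Finset.range L, (S (t + n) - S t) = n * c := by
  have h := Finset.sum_range_add S L n
  rw [add_comm L n, Finset.sum_range_add] at h
  have hshift : ∑ t ∈ Finset.range n, S (L + t) = ∑ t ∈ Finset.range n, S t + n * c := by
    simp [add_comm L, hS, Finset.sum_add_distrib]
  simp only [Finset.sum_sub_distrib, add_comm _ n]
  linarith

theorem Finset.sum_div_card_le_of_le_add_one {ι : Type*} {s : Finset ι} {x : ι → ℤ}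
    (hx : ∀ i ∈ s, ∀ j ∈ s, x i ≤ x j + 1) {j : ι} (hj : j ∈ s) :
    (∑ i ∈ s, x i) / s.card ≤ x j := by
  have hcard : 0 < (s.card : ℤ) := by exact_mod_cast Finset.card_pos.2 ⟨j, hj⟩
  rw [← Int.lt_add_one_iff, Int.ediv_lt_iff_lt_mul hcard]
  calc ∑ i ∈ s, x i < ∑ _i ∈ s, (x j + 1) :=
        Finset.sum_lt_sum (fun i hi ↦ hx i hi j hj) ⟨j, hj, lt_add_one _⟩
    _ = (x j + 1) * s.card := by simp [mul_comm]

theorem List.map_range_mul_of_periodic {α : Type*} {f : ℕ → α} {L : ℕ}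
    (hf : Function.Periodic f L) (p : ℕ) :
    (List.range (p * L)).map f = (List.replicate p ((List.range L).map f)).flatten := by
  induction p with
  | zero => simp
  | succ p ih =>
    rw [Nat.succ_mul, List.range_add, List.map_append, ih, List.replicate_succ',
      List.flatten_append, List.flatten_singleton, List.map_map]
    congr 2
    funext x
    simpa [add_comm] using (hf.nat_mul p) x

theorem List.count_zero_add_count_one (l : List (Fin 2)) : l.count 0 + l.count 1 = l.length := by
  induction l with
  | nil => rfl
  | cons a l ih => fin_cases a <;> simp <;> omega

theorem List.eq_of_count_one_take {u v : List (Fin 2)} (hlen : u.length = v.length)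
    (h : ∀ i ≤ u.length, (u.take i).count 1 = (v.take i).count 1) : u = v := by
  refine List.ext_getElem hlen fun i hu hv ↦ ?_
  have hi := h (i + 1) hu
  rw [List.take_add_one, List.take_add_one, List.count_append, List.count_append,
    h i hu.le, List.getElem?_eq_getElem hu, List.getElem?_eq_getElem hv] at hi
  generalize u[i] = a, v[i] = b at hi
  fin_cases a <;> fin_cases b <;> simp_all

theorem conj_iff_isRotated {α : Type*} {w w' : List α} : Conj w w' ↔ w ~r w' := by
  constructor
  · rintro ⟨x, y, rfl, rfl⟩
    exact List.isRotated_append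
  · intro h
    obtain ⟨n, hn, rfl⟩ := List.isRotated_iff_mod.mp h
    exact ⟨w.take n, w.drop n, (List.take_append_drop n w).symm,
      List.rotate_eq_drop_append_take hn⟩

theorem cFactor_iff_exists_isPrefix_rotate {α : Type*} {u w : List α} :
    CFactor u w ↔ ∃ t, u <+: w.rotate t := by
  constructor
  · rintro ⟨w', hc, hu⟩
    obtain ⟨m, rfl⟩ := conj_iff_isRotated.mp hc
    obtain ⟨s, hus, hs⟩ := List.infix_iff_prefix_suffix.mp hu
    refine ⟨m + ((w.rotate m).length - s.length), ?_⟩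
    rw [← List.rotate_rotate, List.rotate_eq_drop_append_take (Nat.sub_le _ _),
      ← List.suffix_iff_eq_drop.mp hs]
    exact hus.trans (List.prefix_append _ _)
  · rintro ⟨t, hu⟩
    exact ⟨w.rotate t, conj_iff_isRotated.mpr ⟨t, rfl⟩, hu.isInfix⟩

theorem CFactor.of_conj {α : Type*} {u w w' : List α} (h : Conj w w') (hu : CFactor u w') :
    CFactor u w :=
  let ⟨w'', hc, hi⟩ := hu
  ⟨w'', conj_iff_isRotated.mpr ((conj_iff_isRotated.mp h).trans (conj_iff_isRotated.mp hc)), hi⟩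

theorem CircBalanced.of_conj {α : Type*} [DecidableEq α] {w w' : List α} (h : Conj w w')
    (hw' : CircBalanced w') : CircBalanced w := fun u v hu hv ↦
  have h' : Conj w' w := conj_iff_isRotated.mpr (conj_iff_isRotated.mp h).symm
  hw' u v (hu.of_conj h') (hv.of_conj h')

def periodicOne (w : List (Fin 2)) (t : ℕ) : ℤ := if w[t % w.length]? = some 1 then 1 else 0

def onesPrefix (w : List (Fin 2)) (t : ℕ) : ℤ := ∑ i ∈ Finset.range t, periodicOne w i

theorem count_take_rotate {w : List (Fin 2)} (t : ℕ) {n : ℕ} (hn : n ≤ w.length) :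
    (((w.rotate t).take n).count 1 : ℤ) = onesPrefix w (t + n) - onesPrefix w t := by
  induction n with
  | zero => simp
  | succ n ih =>
    have hstep : onesPrefix w (t + (n + 1)) = onesPrefix w (t + n) + periodicOne w (t + n) :=
      Finset.sum_range_succ _ _
    rw [List.take_add_one, List.count_append, Nat.cast_add, ih (by omega),
      List.getElem?_rotate (by simpa using hn), hstep, periodicOne, Nat.add_comm n t]
    rcases w[(t + n) % w.length]? with _ | a
    · simp
    · fin_cases a <;> simp; ring

theorem onesPrefix_add_length (w : List (Fin 2)) (t : ℕ) :
    onesPrefix w (t + w.length) = onesPrefix w t + w.count 1 := by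
  rw [← (List.rotate_perm w t).count_eq,
    ← List.take_of_length_le (List.length_rotate w t).le, count_take_rotate t le_rfl]
  ring

theorem count_one_of_isPrefix_rotate {u w : List (Fin 2)} {t : ℕ} (hu : u <+: w.rotate t) :
    u.length ≤ w.length ∧ (u.count 1 : ℤ) = onesPrefix w (t + u.length) - onesPrefix w t := by
  have hlen : u.length ≤ w.length := by simpa using hu.length_le
  refine ⟨hlen, ?_⟩
  rw [List.prefix_iff_eq_take.mp hu, count_take_rotate t (by simpa using hlen), List.length_take,
    List.length_rotate, min_eq_left hlen]

theorem circBalanced_iff_onesPrefix {w : List (Fin 2)} :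
    CircBalanced w ↔ ∀ t₁ t₂ n, n ≤ w.length →
      onesPrefix w (t₁ + n) - onesPrefix w t₁ ≤ onesPrefix w (t₂ + n) - onesPrefix w t₂ + 1 := by
  constructor
  · intro hB t₁ t₂ n hn
    have hfac : ∀ t, CFactor ((w.rotate t).take n) w := fun t ↦
      cFactor_iff_exists_isPrefix_rotate.mpr ⟨t, List.take_prefix _ _⟩
    have hlen : ∀ t, ((w.rotate t).take n).length = n := fun t ↦ by simpa using hn
    have := hB _ _ (hfac t₁) (hfac t₂) (by rw [hlen, hlen]) 1
    rw [count_take_rotate t₁ hn, count_take_rotate t₂ hn] at this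
    simp only [Set.mem_insert_iff, Set.mem_singleton_iff] at this
    omega
  · intro h u v hu hv hlen a
    obtain ⟨t₁, hu⟩ := cFactor_iff_exists_isPrefix_rotate.mp hu
    obtain ⟨t₂, hv⟩ := cFactor_iff_exists_isPrefix_rotate.mp hv
    obtain ⟨hun, hu1⟩ := count_one_of_isPrefix_rotate hu
    obtain ⟨-, hv1⟩ := count_one_of_isPrefix_rotate hv
    rw [← hlen] at hv1
    have h₁₂ := h t₁ t₂ u.length hun
    have h₂₁ := h t₂ t₁ u.length hun
    have hu01 := u.count_zero_add_count_one
    have hv01 := v.count_zero_add_count_one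
    simp only [Set.mem_insert_iff, Set.mem_singleton_iff]
    fin_cases a <;> simp <;> omega

def mechanicalLetter (h L t : ℕ) : Fin 2 := if t * h / L < (t + 1) * h / L then 1 else 0

def mechanicalWord (h L : ℕ) : List (Fin 2) := (List.range L).map (mechanicalLetter h L)

theorem christoffel_eq_mechanicalWord (k M : ℕ) : christoffel k M = mechanicalWord (M - k) M :=
  rfl

theorem mechanicalLetter_periodic (h L : ℕ) : Function.Periodic (mechanicalLetter h L) L := by
  intro t
  rcases L.eq_zero_or_pos with rfl | hL
  · rfl
  have key : ∀ a, (a + L) * h / L = a * h / L + h := fun a ↦ by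
    rw [add_mul, mul_comm L h, Nat.add_mul_div_right _ _ hL]
  simp only [mechanicalLetter, show t + L + 1 = t + 1 + L by ring, key]
  simp

theorem flatten_replicate_mechanicalWord (h L : ℕ) {p : ℕ} (hp : 0 < p) :
    (List.replicate p (mechanicalWord h L)).flatten = mechanicalWord (p * h) (p * L) := by
  rw [mechanicalWord, ← List.map_range_mul_of_periodic (mechanicalLetter_periodic h L),
    mechanicalWord]
  congr 1
  funext t
  simp only [mechanicalLetter, mul_left_comm _ p, Nat.mul_div_mul_left _ _ hp]

theorem onesPrefix_mechanicalWord {h L : ℕ} (hhL : h ≤ L) (t : ℕ) :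
    onesPrefix (mechanicalWord h L) t = ((t * h / L : ℕ) : ℤ) := by
  rcases L.eq_zero_or_pos with rfl | hL
  · simp [onesPrefix, periodicOne, mechanicalWord]
  induction t with
  | zero => simp [onesPrefix]
  | succ t ih =>
    have hlen : (mechanicalWord h L).length = L := by simp [mechanicalWord]
    have hletter : periodicOne (mechanicalWord h L) t
        = if mechanicalLetter h L t = 1 then 1 else 0 := by
      rw [periodicOne, hlen, List.getElem?_eq_getElem (by rw [hlen]; exact Nat.mod_lt t hL)]
      simp [mechanicalWord, (mechanicalLetter_periodic h L).map_mod_nat]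
    have hjump : (t + 1) * h / L < t * h / L + 2 := by
      rw [Nat.div_lt_iff_lt_mul hL]
      nlinarith [Nat.lt_div_mul_add (a := t * h) hL]
    have hmono : t * h / L ≤ (t + 1) * h / L := Nat.div_le_div_right (by nlinarith)
    rw [onesPrefix, Finset.sum_range_succ, ← onesPrefix, ih, hletter, mechanicalLetter]
    by_cases hj : t * h / L < (t + 1) * h / L
    · rw [if_pos hj, if_pos rfl]
      omega
    · rw [if_neg hj, if_neg (by decide)]
      omega

theorem count_take_mechanicalWord {h L i : ℕ} (hhL : h ≤ L) (hi : i ≤ L) :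
    ((mechanicalWord h L).take i).count 1 = i * h / L := by
  have := count_take_rotate (w := mechanicalWord h L) 0 (by simpa [mechanicalWord] using hi)
  rw [List.rotate_zero, zero_add, onesPrefix_mechanicalWord hhL, onesPrefix_mechanicalWord hhL,
    zero_mul, Nat.zero_div, Nat.cast_zero, sub_zero] at this
  exact_mod_cast this

theorem circBalanced_mechanicalWord {h L : ℕ} (hhL : h ≤ L) :
    CircBalanced (mechanicalWord h L) := by
  refine circBalanced_iff_onesPrefix.mpr fun t₁ t₂ n _ ↦ ?_
  simp only [onesPrefix_mechanicalWord hhL, add_mul]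
  have := Nat.div_add_div_le_add_div (x := t₁ * h) (y := n * h) (z := L)
  have := Nat.div_add_div_le_add_div (x := t₂ * h) (y := n * h) (z := L)
  have := Nat.add_div_le_add_div_add_one (t₁ * h) (n * h) L
  have := Nat.add_div_le_add_div_add_one (t₂ * h) (n * h) L
  omega

theorem exists_rotate_eq_mechanicalWord {w : List (Fin 2)} (hB : CircBalanced w) (hw : w ≠ []) :
    ∃ s, w.rotate s = mechanicalWord (w.count 1) w.length := by
  have hL : 0 < w.length := List.length_pos_iff.2 hw
  have hbal := circBalanced_iff_onesPrefix.mp hB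
  have hper := onesPrefix_add_length w
  obtain ⟨s, hsL, hs⟩ := Function.Periodic.exists_lt_forall_le
    (g := fun t ↦ w.length * onesPrefix w t - t * w.count 1) (fun t ↦ by simp [hper]; ring) hL
  have hwindow : ∀ i ≤ w.length,
      onesPrefix w (s + i) - onesPrefix w s = ((i * w.count 1 / w.length : ℕ) : ℤ) := by
    intro i hi
    push_cast
    apply le_antisymm
    · rw [Int.le_ediv_iff_mul_le (by exact_mod_cast hL)]
      have := hs (s + i)
      push_cast at this
      linarith
    · have := Finset.sum_div_card_le_of_le_add_one
        (x := fun t ↦ onesPrefix w (t + i) - onesPrefix w t)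
        (fun t _ t' _ ↦ hbal t t' i hi) (Finset.mem_range.2 hsL)
      rwa [Finset.sum_range_add_sub_eq_mul hper, Finset.card_range] at this
  refine ⟨s, List.eq_of_count_one_take (by simp [mechanicalWord]) fun i hi ↦ ?_⟩
  have hi : i ≤ w.length := by simpa using hi
  rw [count_take_mechanicalWord List.count_le_length hi]
  exact_mod_cast (count_take_rotate s hi).trans (hwindow i hi)

theorem mechanicalWord_eq_flatten_replicate_christoffel {h L : ℕ} (h0 : 0 < h) (hL : h < L) :
    ∃ k M p : ℕ, 0 < k ∧ k < M ∧ Nat.Coprime k (M - k) ∧ 1 ≤ p ∧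
      mechanicalWord h L = (List.replicate p (christoffel k M)).flatten := by
  have hd : 0 < h.gcd L := Nat.gcd_pos_of_pos_left _ h0
  have hlt : h / h.gcd L < L / h.gcd L := Nat.div_lt_div_of_lt_of_dvd (Nat.gcd_dvd_right _ _) hL
  have hpos : 0 < h / h.gcd L := Nat.div_pos (Nat.le_of_dvd h0 (Nat.gcd_dvd_left _ _)) hd
  refine ⟨L / h.gcd L - h / h.gcd L, L / h.gcd L, h.gcd L, by omega, by omega, ?_, hd, ?_⟩
  · rw [Nat.sub_sub_self hlt.le]
    exact (Nat.coprime_sub_self_left hlt.le).2 (Nat.coprime_div_gcd_div_gcd hd).symm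
  · rw [christoffel_eq_mechanicalWord, Nat.sub_sub_self hlt.le,
      flatten_replicate_mechanicalWord _ _ hd, Nat.mul_div_cancel' (Nat.gcd_dvd_left _ _),
      Nat.mul_div_cancel' (Nat.gcd_dvd_right _ _)]

theorem stmt_7 (w : List (Fin 2)) (h0 : (0 : Fin 2) ∈ w) (h1 : (1 : Fin 2) ∈ w) :
    CircBalanced w ↔
    ∃ k M p : ℕ, 0 < k ∧ k < M ∧ Nat.Coprime k (M - k) ∧ 1 ≤ p ∧
      Conj w ((List.replicate p (christoffel k M)).flatten) := by
  constructor
  · intro hB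
    have hlt : w.count 1 < w.length := by
      have := w.count_zero_add_count_one
      have := List.count_pos_iff.2 h0
      omega
    obtain ⟨s, hs⟩ := exists_rotate_eq_mechanicalWord hB (List.ne_nil_of_mem h0)
    obtain ⟨k, M, p, hk, hkM, hcop, hp, hkMp⟩ :=
      mechanicalWord_eq_flatten_replicate_christoffel (List.count_pos_iff.2 h1) hlt
    exact ⟨k, M, p, hk, hkM, hcop, hp, conj_iff_isRotated.2 ⟨s, hs.trans hkMp⟩⟩
  · rintro ⟨k, M, p, -, -, -, hp, hconj⟩
    rw [christoffel_eq_mechanicalWord, flatten_replicate_mechanicalWord _ _ hp] at hconj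
    exact (circBalanced_mechanicalWord (Nat.mul_le_mul_left p (Nat.sub_le M k))).of_conj hconj
end

section
/- Every Christoffel word C(k, M−k) (with k, M−k coprime positive integers and M ≥ 2) has the form 0·Q·1, where Q is a palindrome. -/
theorem List.palindrome_map_range {α : Type*} {m : ℕ} {g : ℕ → α}
    (hg : ∀ j < m, g (m - 1 - j) = g j) : ((List.range m).map g).Palindrome := by
  refine List.Palindrome.of_reverse_eq ?_
  rw [← List.map_reverse, List.range_eq_range', List.reverse_range', List.map_map,
    ← List.range_eq_range']
  exact List.map_congr_left fun j hj => by simpa using hg j (List.mem_range.mp hj)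

theorem List.map_range_add_two {α : Type*} (f : ℕ → α) (m : ℕ) :
    (List.range (m + 2)).map f =
      f 0 :: ((List.range m).map (fun j => f (j + 1)) ++ [f (m + 1)]) := by
  rw [List.range_succ, List.range_succ_eq_map]
  simp [Function.comp_def]

theorem Nat.mul_div_add_mul_div_add_one {b M i j : ℕ} (hij : i + j = M) (hdvd : ¬ M ∣ i * b) :
    i * b / M + j * b / M + 1 = b := by
  have hM : 0 < M := Nat.pos_of_ne_zero fun h => hdvd (by simp [← hij] at h; simp [h.1, ← hij])
  have hsum : i * b + j * b = M * b := by rw [← Nat.add_mul, hij]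
  have hcarry : M ≤ i * b % M + j * b % M :=
    Nat.le_mod_add_mod_of_dvd_add_of_not_dvd (hsum ▸ Nat.dvd_mul_right M b) hdvd
  rw [← Nat.add_div_eq_of_le_mod_add_mod hcarry hM, hsum, Nat.mul_div_cancel_left b hM]

/-- The lower mechanical word of slope `b / M`;
`christoffel k M = lowerMechanicalWord (M - k) M`. -/
def lowerMechanicalWord (b M : ℕ) : List (Fin 2) :=
  (List.range M).map fun i => if i * b / M < (i + 1) * b / M then 1 else 0

theorem exists_palindrome_lowerMechanicalWord_eq {b M : ℕ} (hb : 0 < b) (hbM : b < M)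
    (hcop : Nat.Coprime M b) :
    ∃ Q : List (Fin 2), Q.Palindrome ∧ lowerMechanicalWord b M = 0 :: (Q ++ [1]) := by
  obtain ⟨m, rfl⟩ : ∃ m, M = m + 2 := ⟨M - 2, by omega⟩
  set q : ℕ → ℕ := fun i => i * b / (m + 2)
  -- `q i + q (M - i) = b - 1` matches the increment at `i` with the one at `M - 1 - i`.
  have hcompl : ∀ i j, 0 < i → 0 < j → i + j = m + 2 → q i + q j + 1 = b := by
    intro i j hi hj hij
    exact Nat.mul_div_add_mul_div_add_one hij fun hdvd =>
      absurd (Nat.le_of_dvd hi (hcop.dvd_of_dvd_mul_right hdvd)) (by omega)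
  have hq₁ : q 1 = 0 := by simpa [q] using Nat.div_eq_of_lt hbM
  have hqM : q (m + 1 + 1) = b := Nat.mul_div_cancel_left b (by omega)
  let f : ℕ → Fin 2 := fun i => if q i < q (i + 1) then 1 else 0
  have hf₀ : f 0 = 0 := if_neg (by simp [q, hq₁])
  have hf₁ : f (m + 1) = 1 :=
    if_pos (by have := hcompl 1 (m + 1) (by omega) (by omega) (by omega); omega)
  refine ⟨(List.range m).map fun j => f (j + 1),
    List.palindrome_map_range fun j hj => if_congr ?_ rfl rfl, ?_⟩
  · have h₁ := hcompl (j + 1) (m - 1 - j + 1 + 1) (by omega) (by omega) (by omega)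
    have h₂ := hcompl (j + 1 + 1) (m - 1 - j + 1) (by omega) (by omega) (by omega)
    omega
  · change (List.range (m + 2)).map f = _
    rw [List.map_range_add_two, hf₀, hf₁]

theorem stmt_8_general (k M : ℕ) (hk : 0 < k) (hkM : k < M)
    (hcop : Nat.Coprime k (M - k)) :
    ∃ Q : List (Fin 2), Q.Palindrome ∧ christoffel k M = 0 :: (Q ++ [1]) := by
  have hcopM : Nat.Coprime M (M - k) := by
    simpa [Nat.add_sub_cancel' hkM.le] using Nat.coprime_add_self_left.mpr hcop
  exact exists_palindrome_lowerMechanicalWord_eq (by omega) (by omega) hcopM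

theorem stmt_8 (k M : ℕ) (hk : 0 < k) (hkM : k < M)
    (hcop : Nat.Coprime k (M - k)) (hM : 2 ≤ M) :
    ∃ Q : List (Fin 2), Q.Palindrome ∧ christoffel k M = 0 :: (Q ++ [1]) :=
  stmt_8_general k M hk hkM hcop
end

section
/- Let φ be the map on binary words with an even number of 0's that replaces every letter 1 by 2 and replaces every even-numbered occurrence of 0 (the 2nd, 4th, 6th, ... occurrence of 0) by 1. If w is a binary word with an even number of 0's, then for every integer p ≥ 1, φ(w^p) = φ(w)^p. -/
/-- Auxiliary scan for `phi`: the Boolean records whether the next occurrence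
of `0` is odd-numbered. -/
def phiAux : Bool → List (Fin 2) → List (Fin 3)
  | _, [] => []
  | b, a :: t =>
    if a = 0 then (if b then (0 : Fin 3) else 1) :: phiAux (!b) t
    else (2 : Fin 3) :: phiAux b t

/-- `phi` replaces each `1` by `2` and each even-numbered occurrence of `0` by `1`. -/
def phi (w : List (Fin 2)) : List (Fin 3) := phiAux true w

lemma phiAux_append (b : Bool) (u v : List (Fin 2)) :
    phiAux b (u ++ v) = phiAux b u ++ phiAux (if Even (u.count 0) then b else !b) v := by
  induction u generalizing b with
  | nil => simp [phiAux]
  | cons a t ih =>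
    by_cases ha : a = 0
    · subst ha
      by_cases h : Even (t.count 0) <;> simp [phiAux, ih, h, Nat.even_add_one]
    · simp [phiAux, ha, ih]

lemma phiAux_flatten_replicate (b : Bool) {w : List (Fin 2)} (heven : Even (w.count 0))
    (p : ℕ) : phiAux b (List.replicate p w).flatten = (List.replicate p (phiAux b w)).flatten := by
  induction p with
  | zero => simp [phiAux]
  | succ n ih => simp only [List.replicate_succ, List.flatten_cons, phiAux_append, heven, ih,
      if_true]

theorem stmt_14_general (w : List (Fin 2)) (heven : Even (w.count 0))
    (p : ℕ) :
    phi ((List.replicate p w).flatten) = (List.replicate p (phi w)).flatten :=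
  phiAux_flatten_replicate true heven p

theorem stmt_14 (w : List (Fin 2)) (heven : Even (w.count 0))
    (p : ℕ) (hp : 1 ≤ p) :
    phi ((List.replicate p w).flatten) = (List.replicate p (phi w)).flatten :=
  stmt_14_general w heven p
end
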